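/- Zero modes of the stability matrix from broken O(Nf) generators: let (λ, y) be a fixed point and let ω be an antisymmetric real Nf × Nf matrix; set v_i = ω y_i − y_i ω for each i (equivalently (v_i)_{ab} = ω_{ac}(y_i)_{cb} + ω_{bc}(y_i)_{ac}). Then (d/dt) β^λ_{ijkl}(λ, y + t v) evaluated at t = 0 equals 0 for all i, j, k, l, and (d/dt) β^y_i(y + t v) evaluated at t = 0 equals 0 for all i; that is, the direction (0, v) in coupling space is annihilated by the one-loop stability matrix at the fixed point. -/

import Mathlib

open Matrix

noncomputable section

/-- `Z_{ij} = Tr(y_i y_j)` for real (3d Majorana, α = 1) Yukawa couplings. -/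
def Zm {Ns Nf : ℕ} (y : Fin Ns → Matrix (Fin Nf) (Fin Nf) ℝ) (i j : Fin Ns) : ℝ :=
  Matrix.trace (y i * y j)

/-- `X_{ijkl} = (1/8) Σ_σ Tr(y_{σ(i)} y_{σ(j)} y_{σ(k)} y_{σ(l)})`,
summing over all 24 permutations of the index list `(i,j,k,l)`. -/
def Xm {Ns Nf : ℕ} (y : Fin Ns → Matrix (Fin Nf) (Fin Nf) ℝ) (i j k l : Fin Ns) : ℝ :=
  (1 / 8) * ∑ σ : Equiv.Perm (Fin 4),
    Matrix.trace (y (![i, j, k, l] (σ 0)) * y (![i, j, k, l] (σ 1)) *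
      (y (![i, j, k, l] (σ 2)) * y (![i, j, k, l] (σ 3))))

/-- Full permutation symmetry of the quartic coupling tensor. -/
def FullySymm {Ns : ℕ} (lam : Fin Ns → Fin Ns → Fin Ns → Fin Ns → ℝ) : Prop :=
  ∀ i j k l, lam i j k l = lam j i k l ∧ lam i j k l = lam i k j l ∧
    lam i j k l = lam i j l k

/-- One-loop quartic beta function for 3d Majorana fermions (α = 1). -/
def betaLamM {Ns Nf : ℕ} (ε : ℝ) (lam : Fin Ns → Fin Ns → Fin Ns → Fin Ns → ℝ)
    (y : Fin Ns → Matrix (Fin Nf) (Fin Nf) ℝ) (i j k l : Fin Ns) : ℝ :=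
  -ε * lam i j k l
    + ∑ m, ∑ n, (lam i j m n * lam m n k l + lam i k m n * lam m n j l
        + lam i l m n * lam m n j k)
    - 4 * Xm y i j k l
    + (1 / 2) * ∑ m, (Zm y i m * lam m j k l + Zm y j m * lam i m k l
        + Zm y k m * lam i j m l + Zm y l m * lam i j k m)

/-- One-loop Yukawa beta function for 3d Majorana fermions (α = 1). -/
def betaYM {Ns Nf : ℕ} (ε : ℝ) (y : Fin Ns → Matrix (Fin Nf) (Fin Nf) ℝ) (i : Fin Ns) :
    Matrix (Fin Nf) (Fin Nf) ℝ :=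
  (-(1 / 2) * ε) • y i
    + (1 / 2 : ℝ) • ∑ j, (y j * y j * y i + y i * (y j * y j) + (4 : ℝ) • (y j * y i * y j))
    + (1 / 2 : ℝ) • ∑ j, (Zm y i j • y j)

namespace ZeroModeAux

variable {Ns Nf : ℕ}

abbrev Mat (Nf : ℕ) := Matrix (Fin Nf) (Fin Nf) ℝ

/-- Entrywise `HasDerivAt` at `0` for a matrix-valued curve. -/
def MD (F : ℝ → Mat Nf) (F' : Mat Nf) : Prop :=
  ∀ a b, HasDerivAt (fun t => F t a b) (F' a b) 0

lemma MD.congr {F : ℝ → Mat Nf} {D D' : Mat Nf} (h : MD F D) (e : D = D') : MD F D' :=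
  e ▸ h

lemma MD.mul {F G : ℝ → Mat Nf} {F' G' : Mat Nf}
    (hF : MD F F') (hG : MD G G') :
    MD (fun t => F t * G t) (F' * G 0 + F 0 * G') := by
  intro a b
  simp only [Matrix.mul_apply, Matrix.add_apply]
  rw [← Finset.sum_add_distrib]
  exact HasDerivAt.fun_sum fun c _ => ((hF a c).mul (hG c b) : HasDerivAt (fun t => F t a c * G t c b) _ 0)

lemma MD.add {F G : ℝ → Mat Nf} {F' G' : Mat Nf}
    (hF : MD F F') (hG : MD G G') :
    MD (fun t => F t + G t) (F' + G') := fun a b => by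
  exact (hF a b).add (hG a b)

lemma MD.sum {ι : Type*} [Fintype ι] {F : ι → ℝ → Mat Nf} {F' : ι → Mat Nf}
    (h : ∀ i, MD (F i) (F' i)) :
    MD (fun t => ∑ i, F i t) (∑ i, F' i) := fun a b => by
  simp only [Matrix.sum_apply]
  exact HasDerivAt.fun_sum fun i _ => h i a b

lemma MD.const_smul {F : ℝ → Mat Nf} {F' : Mat Nf} (c : ℝ)
    (hF : MD F F') : MD (fun t => c • F t) (c • F') := fun a b => by
  simpa [Matrix.smul_apply, smul_eq_mul] using (hF a b).const_mul c

lemma MD.smul_fun {c : ℝ → ℝ} {c' : ℝ} {F : ℝ → Mat Nf} {F' : Mat Nf}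
    (hc : HasDerivAt c c' 0) (hF : MD F F') :
    MD (fun t => c t • F t) (c' • F 0 + c 0 • F') := fun a b => by
  simp only [Matrix.add_apply, Matrix.smul_apply, smul_eq_mul]; exact hc.mul (hF a b)

lemma MD.trace {F : ℝ → Mat Nf} {F' : Mat Nf} (hF : MD F F') :
    HasDerivAt (fun t => Matrix.trace (F t)) (Matrix.trace F') 0 := by
  simp only [Matrix.trace, Matrix.diag]
  exact HasDerivAt.fun_sum fun a _ => hF a a

lemma MD.base (y v : Mat Nf) : MD (fun t => y + t • v) v := fun a b => by
  simp only [Matrix.add_apply, Matrix.smul_apply, smul_eq_mul]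
  simpa using (hasDerivAt_id (0:ℝ)).mul_const (v a b) |>.const_add (y a b)

lemma key2 (ω A B : Mat Nf) :
    Matrix.trace ((ω * A - A * ω) * B + A * (ω * B - B * ω)) = 0 := by
  simp only [Matrix.sub_mul, Matrix.mul_sub, Matrix.trace_add, Matrix.trace_sub,
    Matrix.mul_assoc]
  rw [Matrix.trace_mul_comm ω (A * B), Matrix.mul_assoc]
  ring

lemma key4 (ω A B C D : Mat Nf) :
    Matrix.trace (((ω * A - A * ω) * B + A * (ω * B - B * ω)) * (C * D)
      + (A * B) * ((ω * C - C * ω) * D + C * (ω * D - D * ω))) = 0 := by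
  simp only [Matrix.sub_mul, Matrix.mul_sub, Matrix.add_mul, Matrix.mul_add,
    Matrix.trace_add, Matrix.trace_sub, Matrix.mul_assoc]
  rw [Matrix.trace_mul_comm ω (A * (B * (C * D))), Matrix.mul_assoc, Matrix.mul_assoc,
    Matrix.mul_assoc]
  ring

section
variable (ω : Mat Nf) (y : Fin Ns → Mat Nf)

lemma hZ (i j : Fin Ns) :
    HasDerivAt (fun t : ℝ => Zm (fun m => y m + t • (ω * y m - y m * ω)) i j) 0 0 := by
  have h := MD.trace ((MD.base (y i) (ω * y i - y i * ω)).mul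
    (MD.base (y j) (ω * y j - y j * ω)))
  simp only [Zm]
  convert h using 1
  rw [eq_comm]
  simpa using key2 ω (y i) (y j)

lemma hX (i j k l : Fin Ns) :
    HasDerivAt (fun t : ℝ => Xm (fun m => y m + t • (ω * y m - y m * ω)) i j k l) 0 0 := by
  simp only [Xm]
  have h : HasDerivAt (fun t : ℝ => ∑ σ : Equiv.Perm (Fin 4),
      Matrix.trace ((fun m => y m + t • (ω * y m - y m * ω)) (![i, j, k, l] (σ 0)) *
        (fun m => y m + t • (ω * y m - y m * ω)) (![i, j, k, l] (σ 1)) *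
        ((fun m => y m + t • (ω * y m - y m * ω)) (![i, j, k, l] (σ 2)) *
         (fun m => y m + t • (ω * y m - y m * ω)) (![i, j, k, l] (σ 3))))) 0 0 := by
    have h0 : HasDerivAt (fun t : ℝ => ∑ σ : Equiv.Perm (Fin 4),
        Matrix.trace ((fun m => y m + t • (ω * y m - y m * ω)) (![i, j, k, l] (σ 0)) *
          (fun m => y m + t • (ω * y m - y m * ω)) (![i, j, k, l] (σ 1)) *
          ((fun m => y m + t • (ω * y m - y m * ω)) (![i, j, k, l] (σ 2)) *
           (fun m => y m + t • (ω * y m - y m * ω)) (![i, j, k, l] (σ 3)))))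
        (∑ _σ : Equiv.Perm (Fin 4), (0:ℝ)) 0 := by
      refine HasDerivAt.fun_sum fun σ _ => ?_
      set a := ![i, j, k, l] (σ 0); set b := ![i, j, k, l] (σ 1)
      set c := ![i, j, k, l] (σ 2); set d := ![i, j, k, l] (σ 3)
      have h := MD.trace (((MD.base (y a) (ω * y a - y a * ω)).mul
          (MD.base (y b) (ω * y b - y b * ω))).mul
        ((MD.base (y c) (ω * y c - y c * ω)).mul
          (MD.base (y d) (ω * y d - y d * ω))))
      convert h using 1
      · rfl
      · rfl
      simp only [smul_zero, add_zero, zero_smul]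
      rw [eq_comm]
      simpa using key4 ω (y a) (y b) (y c) (y d)
    simpa using h0
  simpa using h.const_mul (1/8 : ℝ)
end

section
variable (ω : Mat Nf)

/-- The derivative at 0 is the commutator with `ω` of the value at 0. -/
def MDC (ω : Mat Nf) (F : ℝ → Mat Nf) : Prop := MD F (ω * F 0 - F 0 * ω)

lemma MDC.mul {F G : ℝ → Mat Nf} (hF : MDC ω F) (hG : MDC ω G) :
    MDC ω (fun t => F t * G t) :=
  (MD.mul hF hG).congr (by noncomm_ring)

lemma MDC.add {F G : ℝ → Mat Nf} (hF : MDC ω F) (hG : MDC ω G) :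
    MDC ω (fun t => F t + G t) :=
  (MD.add hF hG).congr (by simp only; noncomm_ring)

lemma MDC.sum {ι : Type*} [Fintype ι] {F : ι → ℝ → Mat Nf}
    (h : ∀ i, MDC ω (F i)) : MDC ω (fun t => ∑ i, F i t) :=
  (MD.sum h).congr (by simp only [Matrix.mul_sum, Matrix.sum_mul, Finset.sum_sub_distrib])

lemma MDC.const_smul {F : ℝ → Mat Nf} (c : ℝ) (hF : MDC ω F) :
    MDC ω (fun t => c • F t) :=
  (MD.const_smul c hF).congr (by simp only [smul_sub, mul_smul_comm, smul_mul_assoc])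

lemma MDC.smul_fun {c : ℝ → ℝ} {F : ℝ → Mat Nf}
    (hc : HasDerivAt c 0 0) (hF : MDC ω F) :
    MDC ω (fun t => c t • F t) :=
  (MD.smul_fun hc hF).congr (by
    simp only [zero_smul, zero_add, smul_sub, mul_smul_comm, smul_mul_assoc])

lemma MDC.base (m : Mat Nf) : MDC ω (fun t : ℝ => m + t • (ω * m - m * ω)) :=
  (MD.base m (ω * m - m * ω)).congr (by simp)

end

end ZeroModeAux

open ZeroModeAux in
/-- Zero modes of the stability matrix from broken `O(N_f)` generators: the direction
`(0, v)` with `v_i = ω y_i − y_i ω` is annihilated by the one-loop stability matrix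
at any fixed point. -/
theorem zero_mode_broken_ONf {Ns Nf : ℕ} (hNs : 1 ≤ Ns) (hNf : 1 ≤ Nf)
    (ε : ℝ) (lam : Fin Ns → Fin Ns → Fin Ns → Fin Ns → ℝ)
    (y : Fin Ns → Matrix (Fin Nf) (Fin Nf) ℝ)
    (hsym : FullySymm lam) (hy : ∀ i, (y i)ᵀ = y i)
    (hfpl : ∀ i j k l, betaLamM ε lam y i j k l = 0)
    (hfpy : ∀ i, betaYM ε y i = 0)
    (ω : Matrix (Fin Nf) (Fin Nf) ℝ) (hω : ωᵀ = -ω) :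
    (∀ i j k l, deriv (fun t : ℝ =>
        betaLamM ε lam (fun m => y m + t • (ω * y m - y m * ω)) i j k l) 0 = 0)
    ∧ (∀ i a b, deriv (fun t : ℝ =>
        betaYM ε (fun m => y m + t • (ω * y m - y m * ω)) i a b) 0 = 0) := by
  constructor
  · intro i j k l
    have hS : HasDerivAt (fun t : ℝ => ∑ m,
        (Zm (fun m' => y m' + t • (ω * y m' - y m' * ω)) i m * lam m j k l
          + Zm (fun m' => y m' + t • (ω * y m' - y m' * ω)) j m * lam i m k l
          + Zm (fun m' => y m' + t • (ω * y m' - y m' * ω)) k m * lam i j m l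
          + Zm (fun m' => y m' + t • (ω * y m' - y m' * ω)) l m * lam i j k m)) 0 0 := by
      have := HasDerivAt.fun_sum (u := (Finset.univ : Finset (Fin Ns)))
        (x := (0:ℝ))
        (fun m _ => ((((hZ ω y i m).mul_const (lam m j k l)).add
            ((hZ ω y j m).mul_const (lam i m k l))).add
            ((hZ ω y k m).mul_const (lam i j m l))).add
            ((hZ ω y l m).mul_const (lam i j k m)))
      simpa using this
    have h : HasDerivAt (fun t : ℝ =>
        betaLamM ε lam (fun m => y m + t • (ω * y m - y m * ω)) i j k l)
        (0 - 4 * 0 + (1/2) * 0) 0 := by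
      exact ((hasDerivAt_const (0:ℝ) _).sub
        ((hX ω y i j k l).const_mul 4)).add (hS.const_mul (1/2))
    simpa using h.deriv
  · intro i a b
    have hYm : ∀ m, MDC ω (fun t : ℝ => y m + t • (ω * y m - y m * ω)) :=
      fun m => MDC.base ω (y m)
    have hBeta : MDC ω (fun t : ℝ =>
        betaYM ε (fun m => y m + t • (ω * y m - y m * ω)) i) := by
      exact (MDC.add ω
        (MDC.add ω
          (MDC.const_smul ω (-(1/2) * ε) (hYm i))
          (MDC.const_smul ω (1/2) (MDC.sum ω (fun j =>
            MDC.add ω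
              (MDC.add ω
                (MDC.mul ω (MDC.mul ω (hYm j) (hYm j)) (hYm i))
                (MDC.mul ω (hYm i) (MDC.mul ω (hYm j) (hYm j))))
              (MDC.const_smul ω 4
                (MDC.mul ω (MDC.mul ω (hYm j) (hYm i)) (hYm j)))))))
        (MDC.const_smul ω (1/2) (MDC.sum ω (fun j =>
          MDC.smul_fun ω (hZ ω y i j) (hYm j)))))
    have e0 : (fun m => y m + (0:ℝ) • (ω * y m - y m * ω)) = y := by
      funext m; simp
    have hB : MD (fun t : ℝ =>
        betaYM ε (fun m => y m + t • (ω * y m - y m * ω)) i) 0 := by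
      refine hBeta.congr ?_
      show ω * betaYM ε (fun m => y m + (0:ℝ) • (ω * y m - y m * ω)) i
        - betaYM ε (fun m => y m + (0:ℝ) • (ω * y m - y m * ω)) i * ω = 0
      rw [e0, hfpy i]
      simp
    simpa using (hB a b).deriv
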